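/- Let n, d ≥ 1 and consider the OV-reduction graph G built from sets A, B each consisting of n copies of the all-ones vector in {0,1}^d. Then G contains the complete bipartite graph K_{n,d} as a subgraph (between the A-vertices and the coordinate vertices), and hence the treewidth of G is at least min(n, d). -/

import Mathlib

/-!
The bags of a tree decomposition that contain a fixed vertex form a subtree, and subtrees of a
tree have the Helly property: pairwise intersecting ones share a node (for three of them, the
median of three pairwise witnesses). In the OV graph `x` is adjacent to every `A`-vertex and every
`A`-vertex to every coordinate vertex, so the subtrees of `x` and the unions
`T(a_i) ∪ T(c_i)`, `i < min n d`, pairwise intersect. A common node is a bag containing `x` and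
one of `a_i`, `c_i` for every `i`, i.e. at least `min n d + 1` vertices.
-/

open SimpleGraph

abbrev OVVert (n d : ℕ) := (Fin n ⊕ Fin n) ⊕ (Fin d ⊕ Bool)

/-- vertex for `a ∈ A` -/
abbrev OVVert.vA {n d : ℕ} (a : Fin n) : OVVert n d := Sum.inl (Sum.inl a)
/-- vertex for `b ∈ B` -/
abbrev OVVert.vB {n d : ℕ} (b : Fin n) : OVVert n d := Sum.inl (Sum.inr b)
/-- coordinate vertex `c_i` -/
abbrev OVVert.vC {n d : ℕ} (i : Fin d) : OVVert n d := Sum.inr (Sum.inl i)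
/-- special vertex `x` -/
abbrev OVVert.vX {n d : ℕ} : OVVert n d := Sum.inr (Sum.inr false)
/-- special vertex `y` -/
abbrev OVVert.vY {n d : ℕ} : OVVert n d := Sum.inr (Sum.inr true)

def ovRel (n d : ℕ) (A B : Fin n → Fin d → Bool) : OVVert n d → OVVert n d → Prop
  | Sum.inl (Sum.inl a), Sum.inr (Sum.inl i) => A a i = true
  | Sum.inl (Sum.inr b), Sum.inr (Sum.inl i) => B b i = true
  | Sum.inr (Sum.inr false), Sum.inl (Sum.inl _) => True
  | Sum.inr (Sum.inr true), Sum.inl (Sum.inr _) => True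
  | Sum.inr (Sum.inr _), Sum.inr (Sum.inl _) => True
  | Sum.inr (Sum.inr false), Sum.inr (Sum.inr true) => True
  | _, _ => False

/-- The Roditty–Vassilevska-Williams OV-reduction graph. -/
def ovGraph (n d : ℕ) (A B : Fin n → Fin d → Bool) : SimpleGraph (OVVert n d) :=
  SimpleGraph.fromRel (ovRel n d A B)

structure TreeDecomposition {V : Type} (G : SimpleGraph V) where
  ι : Type
  tree : SimpleGraph ι
  isTree : tree.IsTree
  bag : ι → Set V
  covers_vertex : ∀ v, ∃ t, v ∈ bag t
  covers_edge : ∀ ⦃u v⦄, G.Adj u v → ∃ t, u ∈ bag t ∧ v ∈ bag t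
  bag_connected : ∀ v, (tree.induce {t | v ∈ bag t}).Connected

/-- The decomposition has width at most `w` (all bags of size at most `w+1`). -/
def TreeDecomposition.widthLE {V : Type} {G : SimpleGraph V}
    (D : TreeDecomposition G) (w : ℕ) : Prop :=
  ∀ t, (D.bag t).ncard ≤ w + 1

/-- Treewidth: the least `w` such that some tree decomposition has width `w`. -/
noncomputable def treewidth {V : Type} (G : SimpleGraph V) : ℕ :=
  sInf {w | ∃ D : TreeDecomposition G, D.widthLE w}

namespace SimpleGraph

variable {V : Type*} {G : SimpleGraph V}

/-- In a tree these are exactly the vertex sets of subtrees. -/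
def IsPathConvex (G : SimpleGraph V) (S : Set V) : Prop :=
  ∀ ⦃u v : V⦄, u ∈ S → v ∈ S → ∀ p : G.Walk u v, p.IsPath → ∀ x ∈ p.support, x ∈ S

lemma isPathConvex_biInter {κ : Type*} {S : κ → Set V} {s : Set κ}
    (h : ∀ i ∈ s, G.IsPathConvex (S i)) : G.IsPathConvex (⋂ i ∈ s, S i) := by
  intro u v hu hv p hp x hx
  simp only [Set.mem_iInter₂] at hu hv ⊢
  exact fun i hi => h i hi (hu i hi) (hv i hi) p hp x hx

lemma IsAcyclic.support_subset_of_isPath (hG : G.IsAcyclic) {u v : V} {p : G.Walk u v}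
    (hp : p.IsPath) (w : G.Walk u v) : p.support ⊆ w.support := by
  classical
  have : p = w.bypass :=
    congrArg Subtype.val ((hG.subsingleton_path u v).elim ⟨p, hp⟩ ⟨_, w.bypass_isPath⟩)
  exact this ▸ w.support_bypass_subset_support

lemma IsAcyclic.isPathConvex_of_preconnected_induce (hG : G.IsAcyclic) {S : Set V}
    (hS : (G.induce S).Preconnected) : G.IsPathConvex S := by
  intro u v hu hv p hp x hx
  obtain ⟨w⟩ := hS ⟨u, hu⟩ ⟨v, hv⟩
  let w' : G.Walk u v := w.map (Embedding.induce S).toHom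
  have hw' : ∀ y ∈ w'.support, y ∈ S := by
    intro y hy
    rw [show w'.support = _ from Walk.support_map _ _, List.mem_map] at hy
    obtain ⟨z, -, rfl⟩ := hy
    exact z.2
  exact hw' x (hG.support_subset_of_isPath hp w' hx)

lemma IsAcyclic.isPathConvex_union (hG : G.IsAcyclic) (hc : G.Preconnected) {S₁ S₂ : Set V}
    (h₁ : G.IsPathConvex S₁) (h₂ : G.IsPathConvex S₂) (h₁₂ : (S₁ ∩ S₂).Nonempty) :
    G.IsPathConvex (S₁ ∪ S₂) := by
  obtain ⟨t, ht₁, ht₂⟩ := h₁₂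
  have cross : ∀ ⦃u v⦄, u ∈ S₁ → v ∈ S₂ →
      ∀ p : G.Walk u v, p.IsPath → ∀ x ∈ p.support, x ∈ S₁ ∪ S₂ := by
    intro u v hu hv p hp x hx
    obtain ⟨q₁, hq₁⟩ := hc.exists_isPath u t
    obtain ⟨q₂, hq₂⟩ := hc.exists_isPath t v
    rcases (Walk.mem_support_append_iff _ _).1 (hG.support_subset_of_isPath hp _ hx) with h | h
    · exact .inl (h₁ hu ht₁ q₁ hq₁ x h)
    · exact .inr (h₂ ht₂ hv q₂ hq₂ x h)
  rintro u v (hu | hu) (hv | hv) p hp x hx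
  · exact .inl (h₁ hu hv p hp x hx)
  · exact cross hu hv p hp x hx
  · exact cross hv hu p.reverse hp.reverse x (p.support_reverse ▸ List.mem_reverse.2 hx)
  · exact .inr (h₂ hu hv p hp x hx)

lemma Walk.exists_eq_append_of_end_mem {X : Set V} {u v : V} (p : G.Walk u v) (hv : v ∈ X) :
    ∃ m ∈ X, ∃ (p₁ : G.Walk u m) (p₂ : G.Walk m v),
      p = p₁.append p₂ ∧ ∀ x ∈ p₁.support, x ∈ X → x = m := by
  induction p with
  | nil => exact ⟨_, hv, .nil, .nil, rfl, by simp⟩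
  | @cons a b c h q ih =>
    by_cases ha : a ∈ X
    · exact ⟨a, ha, .nil, .cons h q, rfl, by simp⟩
    · obtain ⟨m, hm, q₁, q₂, rfl, hfirst⟩ := ih hv
      refine ⟨m, hm, .cons h q₁, q₂, rfl, ?_⟩
      rintro x (_ | ⟨_, hx⟩) hxX
      · exact absurd hxX ha
      · exact hfirst x hx hxX

/-- The median is the first vertex of `p` on `q`. -/
lemma Walk.IsPath.exists_median {a b c : V} {p : G.Walk b a} {q : G.Walk a c}
    (hp : p.IsPath) (hq : q.IsPath) :
    ∃ m ∈ p.support, m ∈ q.support ∧ ∃ r : G.Walk b c, r.IsPath ∧ m ∈ r.support := by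
  classical
  obtain ⟨m, hmq, p₁, p₂, rfl, hfirst⟩ :=
    p.exists_eq_append_of_end_mem (X := {x | x ∈ q.support}) q.start_mem_support
  have hq₂ : (q.dropUntil m hmq).IsPath := hq.dropUntil hmq
  refine ⟨m, by simp, hmq, p₁.append (q.dropUntil m hmq), ?_, by simp⟩
  rw [Walk.isPath_def, Walk.support_append, List.nodup_append]
  refine ⟨hp.of_append_left.support_nodup, hq₂.support_nodup.sublist (List.tail_sublist _), ?_⟩
  rintro x hx₁ _ hx₂ rfl
  obtain rfl : x = m :=
    hfirst x hx₁ (q.support_dropUntil_subset_support hmq (List.mem_of_mem_tail hx₂))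
  have := hq₂.support_nodup
  rw [← Walk.cons_tail_support, List.nodup_cons] at this
  exact this.1 hx₂

lemma Preconnected.inter_inter_nonempty_of_isPathConvex (hc : G.Preconnected)
    {S₁ S₂ S₃ : Set V} (h₁ : G.IsPathConvex S₁) (h₂ : G.IsPathConvex S₂)
    (h₃ : G.IsPathConvex S₃) (h₁₂ : (S₁ ∩ S₂).Nonempty) (h₁₃ : (S₁ ∩ S₃).Nonempty)
    (h₂₃ : (S₂ ∩ S₃).Nonempty) : (S₁ ∩ S₂ ∩ S₃).Nonempty := by
  obtain ⟨c, hc₁, hc₂⟩ := h₁₂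
  obtain ⟨b, hb₁, hb₃⟩ := h₁₃
  obtain ⟨a, ha₂, ha₃⟩ := h₂₃
  obtain ⟨p, hp⟩ := hc.exists_isPath b a
  obtain ⟨q, hq⟩ := hc.exists_isPath a c
  obtain ⟨m, hmp, hmq, r, hr, hmr⟩ := hp.exists_median hq
  exact ⟨m, ⟨h₁ hb₁ hc₁ r hr m hmr, h₂ ha₂ hc₂ q hq m hmq⟩, h₃ hb₃ ha₃ p hp m hmp⟩

theorem Preconnected.iInter_nonempty_of_isPathConvex (hc : G.Preconnected) {κ : Type*}
    [Finite κ] [Nonempty κ] {S : κ → Set V} (hS : ∀ i, G.IsPathConvex (S i))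
    (hpair : ∀ i j, (S i ∩ S j).Nonempty) : (⋂ i, S i).Nonempty := by
  classical
  have : Fintype κ := .ofFinite κ
  have key : ∀ (F : Finset κ) j, (S j ∩ ⋂ i ∈ F, S i).Nonempty := by
    intro F
    induction F using Finset.induction with
    | empty => simpa using fun j => (hpair j j).mono Set.inter_subset_left
    | insert a F _ ih =>
      intro j
      have := hc.inter_inter_nonempty_of_isPathConvex (hS j) (hS a)
        (isPathConvex_biInter fun i _ => hS i) (hpair j a) (ih j) (ih a)
      simpa [Set.biInter_insert, Set.inter_assoc] using this
  obtain ⟨j⟩ := ‹Nonempty κ›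
  exact (key Finset.univ j).mono fun x hx => by simpa using hx.2

end SimpleGraph

namespace TreeDecomposition

variable {V : Type} {G : SimpleGraph V}

lemma isPathConvex_setOf_mem_bag (D : TreeDecomposition G) (v : V) :
    D.tree.IsPathConvex {t | v ∈ D.bag t} :=
  D.isTree.isAcyclic.isPathConvex_of_preconnected_induce (D.bag_connected v).preconnected

theorem exists_bag_mem_and_forall_mem_or_mem (D : TreeDecomposition G) {κ : Type*} [Finite κ]
    {P Q : κ → V} {z : V} (hPQ : ∀ i j, G.Adj (P i) (Q j)) (hz : ∀ i, G.Adj z (P i)) :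
    ∃ t, z ∈ D.bag t ∧ ∀ i, P i ∈ D.bag t ∨ Q i ∈ D.bag t := by
  let B : V → Set D.ι := fun v => {t | v ∈ D.bag t}
  have hB : ∀ v, D.tree.IsPathConvex (B v) := D.isPathConvex_setOf_mem_bag
  have hc := D.isTree.connected.preconnected
  let U : Option κ → Set D.ι := fun o => o.elim (B z) fun i => B (P i) ∪ B (Q i)
  have hU : ∀ o, D.tree.IsPathConvex (U o) := by
    rintro (_ | i)
    · exact hB z
    · exact D.isTree.isAcyclic.isPathConvex_union hc (hB _) (hB _) (D.covers_edge (hPQ i i))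
  have hpair : ∀ o o', (U o ∩ U o').Nonempty := by
    rintro (_ | i) (_ | j)
    · obtain ⟨t, ht⟩ := D.covers_vertex z
      exact ⟨t, ht, ht⟩
    · obtain ⟨t, h₁, h₂⟩ := D.covers_edge (hz j)
      exact ⟨t, h₁, .inl h₂⟩
    · obtain ⟨t, h₁, h₂⟩ := D.covers_edge (hz i)
      exact ⟨t, .inl h₂, h₁⟩
    · obtain ⟨t, h₁, h₂⟩ := D.covers_edge (hPQ i j)
      exact ⟨t, .inl h₁, .inr h₂⟩
  obtain ⟨t, ht⟩ := hc.iInter_nonempty_of_isPathConvex hU hpair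
  rw [Set.mem_iInter] at ht
  exact ⟨t, ht none, fun i => ht (some i)⟩

def single (G : SimpleGraph V) : TreeDecomposition G where
  ι := Unit
  tree := ⊥
  isTree := .of_subsingleton
  bag _ := Set.univ
  covers_vertex _ := ⟨(), trivial⟩
  covers_edge _ _ _ := ⟨(), trivial, trivial⟩
  bag_connected _ := @Connected.of_subsingleton _ _ ⟨⟨(), trivial⟩⟩ _

end TreeDecomposition

lemma le_treewidth {V : Type} {G : SimpleGraph V} {k : ℕ}
    (h : ∀ D : TreeDecomposition G, ∃ t, k + 1 ≤ (D.bag t).ncard) : k ≤ treewidth G :=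
  le_csInf ⟨(Set.univ : Set V).ncard, .single G, fun _ => Nat.le_succ _⟩ fun w ⟨D, hD⟩ => by
    obtain ⟨t, ht⟩ := h D
    have := hD t
    omega

lemma card_add_one_le_ncard_of_forall_mem_or_mem {V κ : Type*} [Finite V] {e : κ ⊕ κ → V}
    (he : Function.Injective e) {z : V} (hz : z ∉ Set.range e) {s : Set V} (hzs : z ∈ s)
    (hs : ∀ i, e (.inl i) ∈ s ∨ e (.inr i) ∈ s) : Nat.card κ + 1 ≤ s.ncard := by
  -- `g i` is whichever of `inl i`, `inr i` is sent into `s`.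
  choose g hg using fun i => show ∃ j, Sum.elim id id j = i ∧ e j ∈ s from
    (hs i).elim (fun h => ⟨.inl i, rfl, h⟩) fun h => ⟨.inr i, rfl, h⟩
  have hg_inj : Function.Injective g := Function.LeftInverse.injective fun i => (hg i).1
  have hz' : z ∉ Set.range (e ∘ g) := fun h => hz (Set.range_comp_subset_range g e h)
  calc Nat.card κ + 1 = (insert z (Set.range (e ∘ g))).ncard := by
        rw [Set.ncard_insert_of_notMem hz', Set.ncard_range_of_injective (he.comp hg_inj)]
    _ ≤ s.ncard :=
        Set.ncard_le_ncard (Set.insert_subset hzs (Set.range_subset_iff.2 fun i => (hg i).2))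

section Treewidth

variable {V : Type} [Finite V] {G : SimpleGraph V}

theorem card_le_treewidth {κ : Type*} {e : κ ⊕ κ → V} (he : Function.Injective e) {z : V}
    (hz : z ∉ Set.range e) (hadj : ∀ i j, G.Adj (e (.inl i)) (e (.inr j)))
    (hz_adj : ∀ i, G.Adj z (e (.inl i))) : Nat.card κ ≤ treewidth G := by
  have : Finite κ := .of_injective _ (he.comp Sum.inl_injective)
  refine le_treewidth fun D => ?_
  obtain ⟨t, hzt, ht⟩ := D.exists_bag_mem_and_forall_mem_or_mem hadj hz_adj
  exact ⟨t, card_add_one_le_ncard_of_forall_mem_or_mem he hz hzt ht⟩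

theorem min_le_treewidth_of_completeBipartiteGraph {n d : ℕ} {f : Fin n ⊕ Fin d → V}
    (hf : Function.Injective f)
    (hf_adj : ∀ u v, (completeBipartiteGraph (Fin n) (Fin d)).Adj u v → G.Adj (f u) (f v))
    {z : V} (hz : z ∉ Set.range f) (hz_adj : ∀ i, G.Adj z (f (.inl i))) :
    min n d ≤ treewidth G := by
  let castMin : Fin (min n d) ⊕ Fin (min n d) → Fin n ⊕ Fin d :=
    Sum.map (Fin.castLE (min_le_left n d)) (Fin.castLE (min_le_right n d))
  have hcast : Function.Injective castMin :=
    Sum.map_injective.2 ⟨Fin.castLE_injective _, Fin.castLE_injective _⟩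
  simpa using card_le_treewidth (hf.comp hcast)
    (fun h => hz (Set.range_comp_subset_range castMin f h))
    (fun i j => hf_adj _ _ (by simp [castMin])) (fun i => hz_adj _)

end Treewidth

section OVGraph

open OVVert

variable {n d : ℕ} {A B : Fin n → Fin d → Bool}

lemma ovGraph_adj_vA_vC {a : Fin n} {i : Fin d} (h : A a i = true) :
    (ovGraph n d A B).Adj (vA a) (vC i) := by
  simp [ovGraph, ovRel, h]

lemma ovGraph_adj_vX_vA (a : Fin n) : (ovGraph n d A B).Adj vX (vA a) := by
  simp [ovGraph, ovRel]

end OVGraph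

open OVVert in
theorem ovGraph_allOnes_treewidth_lower_general (n d : ℕ)
    (A B : Fin n → Fin d → Bool) (hA : ∀ a i, A a i = true) :
    (∃ f : Fin n ⊕ Fin d → OVVert n d, Function.Injective f ∧
      ∀ u v, (completeBipartiteGraph (Fin n) (Fin d)).Adj u v →
        (ovGraph n d A B).Adj (f u) (f v)) ∧
    min n d ≤ treewidth (ovGraph n d A B) := by
  let f : Fin n ⊕ Fin d → OVVert n d := Sum.elim vA vC
  have hf : Function.Injective f := by
    rintro (a | i) (b | j) h <;> simp_all [f]
  have hf_adj : ∀ u v, (completeBipartiteGraph (Fin n) (Fin d)).Adj u v →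
      (ovGraph n d A B).Adj (f u) (f v) := by
    rintro (a | i) (b | j) h
    · simp at h
    · exact ovGraph_adj_vA_vC (hA a j)
    · exact (ovGraph_adj_vA_vC (hA b i)).symm
    · simp at h
  have hX : vX ∉ Set.range f := by
    rintro ⟨a | i, h⟩ <;> cases h
  exact ⟨⟨f, hf, hf_adj⟩,
    min_le_treewidth_of_completeBipartiteGraph hf hf_adj hX ovGraph_adj_vX_vA⟩

open OVVert in
/-- With `A`, `B` consisting of all-ones vectors, the OV-reduction graph contains
`K_{n,d}` as a subgraph (between the A-vertices and the coordinate vertices),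
hence has treewidth at least `min n d`. -/
theorem ovGraph_allOnes_treewidth_lower (n d : ℕ) (hn : 1 ≤ n) (hd : 1 ≤ d)
    (A B : Fin n → Fin d → Bool) (hA : ∀ a i, A a i = true)
    (hB : ∀ b i, B b i = true) :
    (∃ f : Fin n ⊕ Fin d → OVVert n d, Function.Injective f ∧
      ∀ u v, (completeBipartiteGraph (Fin n) (Fin d)).Adj u v →
        (ovGraph n d A B).Adj (f u) (f v)) ∧
    min n d ≤ treewidth (ovGraph n d A B) :=
  ovGraph_allOnes_treewidth_lower_general n d A B hA
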